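/- arXiv:1804.07863 — 4 statements merged into one kernel-verified Lean document; each statement's English description precedes it below -/
import Mathlib

section
/- Let S be a nonempty finite index set of cardinality n, and for each i in S let Y_it, Y_ic be real numbers and p_i ∈ (0,1). Define μ_t = (1/n)·Σ Y_it, μ_c = (1/n)·Σ Y_ic, p_t = (1/n)·Σ p_i, p_c = 1 − p_t, s_t = (1/n)·Σ Y_it·p_i − μ_t·p_t, s_c = (1/n)·Σ Y_ic·(1 − p_i) − μ_c·p_c, ρ_t = μ_t + s_t/p_t, ρ_c = μ_c + s_c/p_c, S_tt = (1/n)·Σ p_i(1−p_i)(Y_it−ρ_t)², S_cc = (1/n)·Σ p_i(1−p_i)(Y_ic−ρ_c)², S_tc = (1/n)·Σ p_i(1−p_i)(Y_it−ρ_t)(Y_ic−ρ_c). Let (W_i)_{i∈S} be independent Bernoulli random variables with P(W_i = 1) = p_i. Then Var( (1/(n·p_t))·Σ_{i∈S} W_i·(Y_it − ρ_t) − (1/(n·p_c))·Σ_{i∈S} (1 − W_i)·(Y_ic − ρ_c) ) = (1/n)·( S_tt/p_t² + S_cc/p_c² + 2·S_tc/(p_t·p_c) ). -/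
/-
Writing `a i = (Y_it - ρ_t)/(n p_t) + (Y_ic - ρ_c)/(n p_c)`, the linearization is
`∑ a i W_i` plus a constant, so by independence its variance is `∑ a i² Var W_i`, and a
`{0,1}`-valued `W_i` with `P(W_i = 1) = p_i` has variance `p_i (1 - p_i)`. Expanding `a i²`
gives the three sums `S_tt`, `S_cc`, `S_tc`.
-/

open MeasureTheory ProbabilityTheory Finset

section

variable {Ω : Type*} [MeasurableSpace Ω] {μ : Measure Ω}

lemma variance_of_forall_eq_zero_or_eq_one [IsProbabilityMeasure μ] {X : Ω → ℝ} (hX : Measurable X)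
    (h01 : ∀ ω, X ω = 0 ∨ X ω = 1) :
    Var[X; μ] = μ.real {ω | X ω = 1} * (1 - μ.real {ω | X ω = 1}) := by
  have hs : MeasurableSet {ω | X ω = 1} := hX (measurableSet_singleton 1)
  have hind : X = {ω | X ω = 1}.indicator 1 := by
    funext ω; rcases h01 ω with h | h <;> simp [h]
  have hsq : X ^ 2 = X := by
    funext ω; rcases h01 ω with h | h <;> simp [h]
  have hmem : MemLp X 2 μ := hind ▸ memLp_indicator_const 2 hs 1 (.inr (measure_ne_top μ _))
  have hmean : μ[X] = μ.real {ω | X ω = 1} := by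
    conv_lhs => rw [hind]
    exact integral_indicator_one hs
  rw [variance_eq_sub hmem, hsq, hmean]
  ring

lemma variance_sum_const_mul_of_iIndepFun {ι : Type*} {X : ι → Ω → ℝ} {s : Finset ι}
    (hX : ∀ i ∈ s, MemLp (X i) 2 μ) (hindep : iIndepFun X μ) (a : ι → ℝ) :
    Var[fun ω => ∑ i ∈ s, a i * X i ω; μ] = ∑ i ∈ s, a i ^ 2 * Var[X i; μ] := by
  have hsum : (fun ω => ∑ i ∈ s, a i * X i ω) = ∑ i ∈ s, fun ω => a i * X i ω := by
    funext ω; simp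
  rw [hsum, IndepFun.variance_sum (fun i hi => (hX i hi).const_mul (a i))]
  · exact sum_congr rfl fun i _ => variance_const_mul (a i) (X i) μ
  · intro i _ j _ hij
    exact (hindep.indepFun hij).comp (measurable_const_mul (a i)) (measurable_const_mul (a j))

end

theorem delta_method_variance_stratum_general
    {Ω ι : Type*} [MeasurableSpace Ω] (μ : Measure Ω) [IsProbabilityMeasure μ]
    (S : Finset ι)
    (Yt Yc p : ι → ℝ) (hp : ∀ i ∈ S, p i ∈ Set.Ioo (0 : ℝ) 1)
    (W : ι → Ω → ℝ)
    (hWmeas : ∀ i, Measurable (W i))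
    (hW01 : ∀ i, ∀ ω, W i ω = 0 ∨ W i ω = 1)
    (hWp : ∀ i ∈ S, μ {ω | W i ω = 1} = ENNReal.ofReal (p i))
    (hindep : iIndepFun W μ)
    (n pt pc ρt ρc Stt Scc Stc : ℝ)
    (hStt : Stt = (1 / n) * ∑ i ∈ S, p i * (1 - p i) * (Yt i - ρt) ^ 2)
    (hScc : Scc = (1 / n) * ∑ i ∈ S, p i * (1 - p i) * (Yc i - ρc) ^ 2)
    (hStc : Stc = (1 / n) * ∑ i ∈ S, p i * (1 - p i) * (Yt i - ρt) * (Yc i - ρc)) :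
    variance (fun ω =>
        (1 / (n * pt)) * ∑ i ∈ S, W i ω * (Yt i - ρt)
          - (1 / (n * pc)) * ∑ i ∈ S, (1 - W i ω) * (Yc i - ρc)) μ
      = (1 / n) * (Stt / pt ^ 2 + Scc / pc ^ 2 + 2 * Stc / (pt * pc)) := by
  set a : ι → ℝ := fun i => (Yt i - ρt) / (n * pt) + (Yc i - ρc) / (n * pc)
  have hlin : (fun ω => (1 / (n * pt)) * ∑ i ∈ S, W i ω * (Yt i - ρt)
        - (1 / (n * pc)) * ∑ i ∈ S, (1 - W i ω) * (Yc i - ρc))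
      = fun ω => ∑ i ∈ S, a i * W i ω + -(1 / (n * pc)) * ∑ i ∈ S, (Yc i - ρc) := by
    funext ω
    simp only [mul_sum, ← sum_sub_distrib, ← sum_add_distrib]
    exact sum_congr rfl fun i _ => by ring
  have hvarW : ∀ i ∈ S, Var[W i; μ] = p i * (1 - p i) := by
    intro i hi
    rw [variance_of_forall_eq_zero_or_eq_one (hWmeas i) (hW01 i), measureReal_def, hWp i hi,
      ENNReal.toReal_ofReal (hp i hi).1.le]
  have hmemW : ∀ i ∈ S, MemLp (W i) 2 μ := fun i _ =>
    .of_bound (hWmeas i).aestronglyMeasurable 1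
      (ae_of_all _ fun ω => by rcases hW01 i ω with h | h <;> simp [h])
  rw [hlin, variance_add_const (by fun_prop), variance_sum_const_mul_of_iIndepFun hmemW hindep,
    sum_congr rfl fun i hi => by rw [hvarW i hi], hStt, hScc, hStc]
  simp only [mul_sum, sum_div, ← sum_add_distrib]
  exact sum_congr rfl fun i _ => by ring

/-- Theorem 1 (delta-method variance of the stratum estimator): with independent
Bernoulli(`p_i`) treatment indicators `W_i`, the variance of the linearization
`(1/(n p_t)) Σ W_i (Y_it − ρ_t) − (1/(n p_c)) Σ (1−W_i)(Y_ic − ρ_c)` equals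
`(1/n)(S_tt/p_t² + S_cc/p_c² + 2 S_tc/(p_t p_c))`. -/
theorem delta_method_variance_stratum
    {Ω ι : Type*} [MeasurableSpace Ω] (μ : Measure Ω) [IsProbabilityMeasure μ]
    (S : Finset ι) (hS : S.Nonempty)
    (Yt Yc p : ι → ℝ) (hp : ∀ i ∈ S, p i ∈ Set.Ioo (0 : ℝ) 1)
    (W : ι → Ω → ℝ)
    (hWmeas : ∀ i, Measurable (W i))
    (hW01 : ∀ i, ∀ ω, W i ω = 0 ∨ W i ω = 1)
    (hWp : ∀ i ∈ S, μ {ω | W i ω = 1} = ENNReal.ofReal (p i))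
    (hindep : iIndepFun W μ)
    (n μt μc pt pc st sc ρt ρc Stt Scc Stc : ℝ)
    (hn : n = (S.card : ℝ))
    (hμt : μt = (1 / n) * ∑ i ∈ S, Yt i)
    (hμc : μc = (1 / n) * ∑ i ∈ S, Yc i)
    (hpt : pt = (1 / n) * ∑ i ∈ S, p i)
    (hpc : pc = 1 - pt)
    (hst : st = (1 / n) * (∑ i ∈ S, Yt i * p i) - μt * pt)
    (hsc : sc = (1 / n) * (∑ i ∈ S, Yc i * (1 - p i)) - μc * pc)
    (hρt : ρt = μt + st / pt)
    (hρc : ρc = μc + sc / pc)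
    (hStt : Stt = (1 / n) * ∑ i ∈ S, p i * (1 - p i) * (Yt i - ρt) ^ 2)
    (hScc : Scc = (1 / n) * ∑ i ∈ S, p i * (1 - p i) * (Yc i - ρc) ^ 2)
    (hStc : Stc = (1 / n) * ∑ i ∈ S, p i * (1 - p i) * (Yt i - ρt) * (Yc i - ρc)) :
    variance (fun ω =>
        (1 / (n * pt)) * ∑ i ∈ S, W i ω * (Yt i - ρt)
          - (1 / (n * pc)) * ∑ i ∈ S, (1 - W i ω) * (Yc i - ρc)) μ
      = (1 / n) * (Stt / pt ^ 2 + Scc / pc ^ 2 + 2 * Stc / (pt * pc)) :=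
  delta_method_variance_stratum_general μ S Yt Yc p hp W hWmeas hW01 hWp hindep n pt pc ρt ρc Stt
    Scc Stc hStt hScc hStc
end

section
/- Let O and R be disjoint nonempty finite index sets, for each i ∈ O ∪ R let Y_it, Y_ic be real numbers and W_i ∈ {0,1}, and write W_it = W_i, W_ic = 1 − W_i. Assume Σ_{i∈O} W_it > 0, Σ_{i∈R} W_it > 0, Σ_{i∈O} W_ic > 0, and Σ_{i∈R} W_ic > 0. Define the spiked-in estimator τ̂_s = (Σ_{i∈O∪R} W_it·Y_it)/(Σ_{i∈O∪R} W_it) − (Σ_{i∈O∪R} W_ic·Y_ic)/(Σ_{i∈O∪R} W_ic), the RCT estimator τ̂_r = (Σ_{i∈R} W_it·Y_it)/(Σ_{i∈R} W_it) − (Σ_{i∈R} W_ic·Y_ic)/(Σ_{i∈R} W_ic), the differences Δ̂_t = (Σ_{i∈O} W_it·Y_it)/(Σ_{i∈O} W_it) − (Σ_{i∈R} W_it·Y_it)/(Σ_{i∈R} W_it) and Δ̂_c = (Σ_{i∈O} W_ic·Y_ic)/(Σ_{i∈O} W_ic) − (Σ_{i∈R} W_ic·Y_ic)/(Σ_{i∈R}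 W_ic), and the proportions c_t = (Σ_{i∈O} W_it)/(Σ_{i∈O∪R} W_it) and c_c = (Σ_{i∈O} W_ic)/(Σ_{i∈O∪R} W_ic). Then τ̂_s − τ̂_r = c_t·Δ̂_t − c_c·Δ̂_c. -/
/-- Equation (13) of the paper: the spiked-in estimator differs from the RCT-only
estimator by `c_t Δ̂_t − c_c Δ̂_c`, a deterministic algebraic identity between
ratio estimators. -/
theorem spiked_minus_rct_identity
    {ι : Type*} [DecidableEq ι] (O R : Finset ι)
    (hO : O.Nonempty) (hR : R.Nonempty) (hdisj : Disjoint O R)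
    (Yt Yc W : ι → ℝ)
    (hW01 : ∀ i ∈ O ∪ R, W i = 0 ∨ W i = 1)
    (hOt : 0 < ∑ i ∈ O, W i) (hRt : 0 < ∑ i ∈ R, W i)
    (hOc : 0 < ∑ i ∈ O, (1 - W i)) (hRc : 0 < ∑ i ∈ R, (1 - W i))
    (τs τr Δt Δc ct cc : ℝ)
    (hτs : τs = (∑ i ∈ O ∪ R, W i * Yt i) / (∑ i ∈ O ∪ R, W i)
              - (∑ i ∈ O ∪ R, (1 - W i) * Yc i) / (∑ i ∈ O ∪ R, (1 - W i)))
    (hτr : τr = (∑ i ∈ R, W i * Yt i) / (∑ i ∈ R, W i)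
              - (∑ i ∈ R, (1 - W i) * Yc i) / (∑ i ∈ R, (1 - W i)))
    (hΔt : Δt = (∑ i ∈ O, W i * Yt i) / (∑ i ∈ O, W i)
              - (∑ i ∈ R, W i * Yt i) / (∑ i ∈ R, W i))
    (hΔc : Δc = (∑ i ∈ O, (1 - W i) * Yc i) / (∑ i ∈ O, (1 - W i))
              - (∑ i ∈ R, (1 - W i) * Yc i) / (∑ i ∈ R, (1 - W i)))
    (hct : ct = (∑ i ∈ O, W i) / (∑ i ∈ O ∪ R, W i))
    (hcc : cc = (∑ i ∈ O, (1 - W i)) / (∑ i ∈ O ∪ R, (1 - W i))) :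
    τs - τr = ct * Δt - cc * Δc := by
  subst hτs hτr hΔt hΔc hct hcc
  rw [Finset.sum_union hdisj, Finset.sum_union hdisj, Finset.sum_union hdisj,
    Finset.sum_union hdisj]
  generalize hA : (∑ i ∈ O, W i * Yt i) = A
  generalize hB : (∑ i ∈ R, W i * Yt i) = B
  generalize hC : (∑ i ∈ O, (1 - W i) * Yc i) = C
  generalize hD : (∑ i ∈ R, (1 - W i) * Yc i) = D
  generalize hp : (∑ i ∈ O, W i) = p at hOt ⊢
  generalize hq : (∑ i ∈ R, W i) = q at hRt ⊢
  generalize hu : (∑ i ∈ O, (1 - W i)) = u at hOc ⊢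
  generalize hv : (∑ i ∈ R, (1 - W i)) = v at hRc ⊢
  have h1 : (0:ℝ) < p + q := by linarith
  have h2 : (0:ℝ) < u + v := by linarith
  field_simp
  ring
end

section
/- Let O and R be disjoint nonempty finite index sets of cardinalities n_o and n_r. For i ∈ O let Y_it, Y_ic be real numbers with p_i ∈ (0,1), and for i ∈ R let Y_it, Y_ic be real numbers with common probability p_r ∈ (0,1). Let (W_i)_{i∈O∪R} be independent Bernoulli random variables with P(W_i = 1) = p_i for i ∈ O and P(W_i = 1) = p_r for i ∈ R. Define for O the quantities p_t = (1/n_o)·Σ_{i∈O} p_i, p_c = 1 − p_t, ρ_t, ρ_c, S_tt, S_cc, S_tc as usual (ρ_t = μ_t + s_t/p_t with μ_t = (1/n_o)Σ_{i∈O} Y_it, s_t = (1/n_o)Σ_{i∈O} Y_it p_i − μ_t p_t, and symmetrically for control; S_tt = (1/n_o)Σ_{i∈O} p_i(1−p_i)(Y_it−ρ_t)², etc.), and for R define μ_rt = (1/n_r)Σ_{i∈R} Y_it, μ_rc = (1/n_r)Σ_{i∈R} Y_ic and σ̄² = (1/n_r)·Σ_{i∈R} [ (Y_it − μ_rt)(1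 − p_r) + (Y_ic − μ_rc)·p_r ]². Let L_o = (1/(n_o·p_t))·Σ_{i∈O} W_i(Y_it − ρ_t) − (1/(n_o·p_c))·Σ_{i∈O} (1−W_i)(Y_ic − ρ_c) and L_r = (1/(n_r·p_r))·Σ_{i∈R} W_i(Y_it − μ_rt) − (1/(n_r·(1−p_r)))·Σ_{i∈R} (1−W_i)(Y_ic − μ_rc), and set λ = n_o/(n_o + n_r). Then Var(λ·L_o + (1−λ)·L_r) = (λ/(n_o+n_r))·( S_tt/p_t² + S_cc/p_c² + 2·S_tc/(p_t·p_c) ) + ((1−λ)/(n_o+n_r))·( σ̄²/(p_r·(1−p_r)) ). -/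
/-!
Both stratum linearizations are affine in the indicators: collecting the coefficient of each
`W i` writes `L = const + ∑ a_i W_i`, so for independent Bernoulli indicators
`Var L = ∑ a_i² p_i (1 - p_i)`; expanding the square gives `(S_tt/p_t² + S_cc/p_c² +
2 S_tc/(p_t p_c))/n_o` for the observational stratum and `σ̄²/(n_r p_r (1 - p_r))` for the
randomized one. The strata use disjoint sets of indicators, so `L_o` and `L_r` are independent and
`Var(λ L_o + (1-λ) L_r) = λ² Var L_o + (1-λ)² Var L_r`; finally `λ²/n_o = λ/(n_o+n_r)` and
`(1-λ)²/n_r = (1-λ)/(n_o+n_r)`.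
-/

open MeasureTheory ProbabilityTheory Finset

section Bernoulli

variable {Ω : Type*} [MeasurableSpace Ω] {μ : Measure Ω} {W : Ω → ℝ}

lemma memLp_of_forall_eq_zero_or_eq_one [IsFiniteMeasure μ] (hW : Measurable W)
    (h01 : ∀ ω, W ω = 0 ∨ W ω = 1) (q : ENNReal) : MemLp W q μ :=
  memLp_of_bounded (a := 0) (b := 1)
    (.of_forall fun ω => by rcases h01 ω with h | h <;> simp [h]) hW.aestronglyMeasurable q

lemma variance_of_forall_eq_zero_or_eq_one_s14 [IsProbabilityMeasure μ] (hW : Measurable W)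
    (h01 : ∀ ω, W ω = 0 ∨ W ω = 1) {p : ℝ} (hp : 0 ≤ p)
    (hWp : μ {ω | W ω = 1} = ENNReal.ofReal p) :
    variance W μ = p * (1 - p) := by
  have h_indicator : W = {ω | W ω = 1}.indicator 1 := by
    funext ω
    rcases h01 ω with h | h <;> simp [Set.indicator, h]
  have h_mean : μ[W] = p := by
    have h_set : MeasurableSet {ω | W ω = 1} := hW (measurableSet_singleton 1)
    rw [h_indicator, integral_indicator_one h_set, measureReal_def, hWp, ENNReal.toReal_ofReal hp]
  have h_sq : W ^ 2 = W := by
    funext ω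
    rcases h01 ω with h | h <;> simp [h]
  rw [variance_eq_sub (memLp_of_forall_eq_zero_or_eq_one hW h01 2), h_sq, h_mean]
  ring

end Bernoulli

namespace ProbabilityTheory

lemma IndepFun.variance_const_mul_add_const_mul {Ω : Type*} [MeasurableSpace Ω]
    {μ : Measure Ω} {X Y : Ω → ℝ} (hX : MemLp X 2 μ) (hY : MemLp Y 2 μ) (h : IndepFun X Y μ)
    (a b : ℝ) :
    variance (fun ω => a * X ω + b * Y ω) μ = a ^ 2 * variance X μ + b ^ 2 * variance Y μ := by
  rw [IndepFun.variance_fun_add (hX.const_mul a) (hY.const_mul b)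
    (h.comp (measurable_const_mul a) (measurable_const_mul b)),
    variance_const_mul, variance_const_mul]

section IpwContrast

variable {Ω ι : Type*}

/-- `L_o` and `L_r` are of this form, with `x = Y_t - ρ_t`, `y = Y_c - ρ_c` (resp. the means). -/
def ipwContrast (s : Finset ι) (W : ι → Ω → ℝ) (A B : ℝ) (x y : ι → ℝ) : Ω → ℝ :=
  fun ω => A * ∑ i ∈ s, W i ω * x i - B * ∑ i ∈ s, (1 - W i ω) * y i

lemma ipwContrast_eq_const_add_sum (s : Finset ι) (W : ι → Ω → ℝ) (A B : ℝ) (x y : ι → ℝ) :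
    ipwContrast s W A B x y =
      fun ω => -(B * ∑ i ∈ s, y i) + ∑ i ∈ s, (A * x i + B * y i) * W i ω := by
  funext ω
  simp only [ipwContrast, mul_sum, ← sum_neg_distrib, ← sum_sub_distrib, ← sum_add_distrib]
  exact sum_congr rfl fun i _ => by ring

variable [MeasurableSpace Ω] {μ : Measure Ω} {W : ι → Ω → ℝ}

lemma memLp_ipwContrast [IsFiniteMeasure μ] (hW : ∀ i, Measurable (W i))
    (h01 : ∀ i ω, W i ω = 0 ∨ W i ω = 1) (s : Finset ι) (A B : ℝ) (x y : ι → ℝ) :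
    MemLp (ipwContrast s W A B x y) 2 μ := by
  rw [ipwContrast_eq_const_add_sum]
  have hsum := memLp_finsetSum s fun i _ =>
    (memLp_of_forall_eq_zero_or_eq_one (hW i) (h01 i) 2 (μ := μ)).const_mul (A * x i + B * y i)
  exact (memLp_const (-(B * ∑ i ∈ s, y i))).add hsum

lemma iIndepFun.variance_ipwContrast [IsProbabilityMeasure μ] (hindep : iIndepFun W μ)
    (hW : ∀ i, Measurable (W i)) (h01 : ∀ i ω, W i ω = 0 ∨ W i ω = 1)
    {s : Finset ι} {p : ι → ℝ} (hp : ∀ i ∈ s, 0 ≤ p i)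
    (hWp : ∀ i ∈ s, μ {ω | W i ω = 1} = ENNReal.ofReal (p i)) (A B : ℝ) (x y : ι → ℝ) :
    variance (ipwContrast s W A B x y) μ
      = ∑ i ∈ s, (A * x i + B * y i) ^ 2 * (p i * (1 - p i)) := by
  have hmem : ∀ i ∈ s, MemLp (fun ω => (A * x i + B * y i) * W i ω) 2 μ := fun i _ =>
    (memLp_of_forall_eq_zero_or_eq_one (hW i) (h01 i) 2).const_mul _
  rw [ipwContrast_eq_const_add_sum, variance_const_add (memLp_finsetSum s hmem).1, ← sum_fn,
    IndepFun.variance_sum hmem]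
  · refine sum_congr rfl fun i hi => ?_
    rw [variance_const_mul,
      variance_of_forall_eq_zero_or_eq_one_s14 (hW i) (h01 i) (hp i hi) (hWp i hi)]
  · intro i _ j _ hij
    exact (hindep.indepFun hij).comp (measurable_const_mul _) (measurable_const_mul _)

lemma iIndepFun.indepFun_ipwContrast (hindep : iIndepFun W μ)
    (hW : ∀ i, Measurable (W i)) {S T : Finset ι} (hST : Disjoint S T) (A B A' B' : ℝ)
    (x y x' y' : ι → ℝ) :
    IndepFun (ipwContrast S W A B x y) (ipwContrast T W A' B' x' y') μ := by
  have h := (hindep.indepFun_finset S T hST hW).comp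
    (φ := fun v : S → ℝ => -(B * ∑ i ∈ S, y i) + ∑ i : S, (A * x i + B * y i) * v i)
    (ψ := fun v : T → ℝ => -(B' * ∑ i ∈ T, y' i) + ∑ i : T, (A' * x' i + B' * y' i) * v i)
    (by fun_prop) (by fun_prop)
  rw [ipwContrast_eq_const_add_sum, ipwContrast_eq_const_add_sum]
  convert h using 1 <;> funext ω <;> exact congrArg _ (sum_coe_sort _ _).symm

end IpwContrast

end ProbabilityTheory

section StratumAlgebra

variable {ι K : Type*} [Field K] (s : Finset ι)

lemma sum_ipw_coeff_sq_mul (n q q' : K) (v x y : ι → K) :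
    ∑ i ∈ s, (1 / (n * q) * x i + 1 / (n * q') * y i) ^ 2 * v i
      = 1 / n * ((1 / n * ∑ i ∈ s, v i * x i ^ 2) / q ^ 2
        + (1 / n * ∑ i ∈ s, v i * y i ^ 2) / q' ^ 2
        + 2 * (1 / n * ∑ i ∈ s, v i * x i * y i) / (q * q')) := by
  simp only [mul_sum, sum_div, ← sum_add_distrib]
  exact sum_congr rfl fun i _ => by ring

lemma sum_ipw_coeff_sq_mul_const {q : K} (hq : q ≠ 0) (hq' : 1 - q ≠ 0) (n : K) (x y : ι → K) :
    ∑ i ∈ s, (1 / (n * q) * x i + 1 / (n * (1 - q)) * y i) ^ 2 * (q * (1 - q))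
      = 1 / n * ((1 / n * ∑ i ∈ s, (x i * (1 - q) + y i * q) ^ 2) / (q * (1 - q))) := by
  simp only [mul_sum, sum_div]
  refine sum_congr rfl fun i _ => ?_
  field_simp

end StratumAlgebra

theorem weighted_average_variance_general
    {Ω ι : Type*} [MeasurableSpace Ω] (μ : Measure Ω) [IsProbabilityMeasure μ]
    [DecidableEq ι] (O R : Finset ι)
    (hR : R.Nonempty) (hdisj : Disjoint O R)
    (Yt Yc p : ι → ℝ) (pr : ℝ) (hpr : pr ∈ Set.Ioo (0 : ℝ) 1)
    (hpO : ∀ i ∈ O, p i ∈ Set.Ioo (0 : ℝ) 1)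
    (hpR : ∀ i ∈ R, p i = pr)
    (W : ι → Ω → ℝ)
    (hWmeas : ∀ i, Measurable (W i))
    (hW01 : ∀ i, ∀ ω, W i ω = 0 ∨ W i ω = 1)
    (hWp : ∀ i ∈ O ∪ R, μ {ω | W i ω = 1} = ENNReal.ofReal (p i))
    (hindep : iIndepFun W μ)
    (no nr pt pc ρt ρc Stt Scc Stc μrt μrc σ2 lam : ℝ)
    (hno : no = (O.card : ℝ)) (hnr : nr = (R.card : ℝ))
    (hStt : Stt = (1 / no) * ∑ i ∈ O, p i * (1 - p i) * (Yt i - ρt) ^ 2)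
    (hScc : Scc = (1 / no) * ∑ i ∈ O, p i * (1 - p i) * (Yc i - ρc) ^ 2)
    (hStc : Stc = (1 / no) * ∑ i ∈ O, p i * (1 - p i) * (Yt i - ρt) * (Yc i - ρc))
    (hσ2 : σ2 = (1 / nr) * ∑ i ∈ R, ((Yt i - μrt) * (1 - pr) + (Yc i - μrc) * pr) ^ 2)
    (hlam : lam = no / (no + nr))
    (Lo Lr : Ω → ℝ)
    (hLo : Lo = fun ω =>
        (1 / (no * pt)) * ∑ i ∈ O, W i ω * (Yt i - ρt)
          - (1 / (no * pc)) * ∑ i ∈ O, (1 - W i ω) * (Yc i - ρc))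
    (hLr : Lr = fun ω =>
        (1 / (nr * pr)) * ∑ i ∈ R, W i ω * (Yt i - μrt)
          - (1 / (nr * (1 - pr))) * ∑ i ∈ R, (1 - W i ω) * (Yc i - μrc)) :
    variance (fun ω => lam * Lo ω + (1 - lam) * Lr ω) μ
      = (lam / (no + nr)) * (Stt / pt ^ 2 + Scc / pc ^ 2 + 2 * Stc / (pt * pc))
        + ((1 - lam) / (no + nr)) * (σ2 / (pr * (1 - pr))) := by
  have hnr_pos : 0 < nr := by rw [hnr]; exact_mod_cast hR.card_pos
  have hsum_pos : 0 < no + nr := by rw [hno]; positivity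
  have hWpR : ∀ i ∈ R, μ {ω | W i ω = 1} = ENNReal.ofReal pr := fun i hi =>
    hpR i hi ▸ hWp i (mem_union_right O hi)
  have hLo' : Lo = ipwContrast O W (1 / (no * pt)) (1 / (no * pc))
      (fun i => Yt i - ρt) (fun i => Yc i - ρc) := hLo
  have hLr' : Lr = ipwContrast R W (1 / (nr * pr)) (1 / (nr * (1 - pr)))
      (fun i => Yt i - μrt) (fun i => Yc i - μrc) := hLr
  have hVo : variance Lo μ = 1 / no * (Stt / pt ^ 2 + Scc / pc ^ 2 + 2 * Stc / (pt * pc)) := by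
    rw [hLo', hindep.variance_ipwContrast hWmeas hW01
      (fun i hi => (hpO i hi).1.le) (fun i hi => hWp i (mem_union_left R hi)), hStt, hScc, hStc]
    exact sum_ipw_coeff_sq_mul O no pt pc _ _ _
  have hVr : variance Lr μ = 1 / nr * (σ2 / (pr * (1 - pr))) := by
    rw [hLr', hindep.variance_ipwContrast hWmeas hW01 (p := fun _ => pr)
      (fun _ _ => hpr.1.le) hWpR, hσ2]
    exact sum_ipw_coeff_sq_mul_const R hpr.1.ne' (sub_ne_zero.2 hpr.2.ne') nr _ _
  have hindep_strata : IndepFun Lo Lr μ := by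
    rw [hLo', hLr']
    exact hindep.indepFun_ipwContrast hWmeas hdisj _ _ _ _ _ _ _ _
  have hLo_memLp : MemLp Lo 2 μ := hLo' ▸ memLp_ipwContrast hWmeas hW01 _ _ _ _ _
  have hLr_memLp : MemLp Lr 2 μ := hLr' ▸ memLp_ipwContrast hWmeas hW01 _ _ _ _ _
  rw [hindep_strata.variance_const_mul_add_const_mul hLo_memLp hLr_memLp, hVo, hVr, hlam]
  field_simp
  ring

/-- Corollary 3 (delta-method variance of the weighted-average estimator): with
independent Bernoulli treatment indicators, `Var(λ L_o + (1−λ) L_r)` equals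
`(λ/(n_o+n_r))(S_tt/p_t² + S_cc/p_c² + 2 S_tc/(p_t p_c))
  + ((1−λ)/(n_o+n_r)) σ̄²/(p_r(1−p_r))` where `λ = n_o/(n_o+n_r)`. -/
theorem weighted_average_variance
    {Ω ι : Type*} [MeasurableSpace Ω] (μ : Measure Ω) [IsProbabilityMeasure μ]
    [DecidableEq ι] (O R : Finset ι)
    (hO : O.Nonempty) (hR : R.Nonempty) (hdisj : Disjoint O R)
    (Yt Yc p : ι → ℝ) (pr : ℝ) (hpr : pr ∈ Set.Ioo (0 : ℝ) 1)
    (hpO : ∀ i ∈ O, p i ∈ Set.Ioo (0 : ℝ) 1)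
    (hpR : ∀ i ∈ R, p i = pr)
    (W : ι → Ω → ℝ)
    (hWmeas : ∀ i, Measurable (W i))
    (hW01 : ∀ i, ∀ ω, W i ω = 0 ∨ W i ω = 1)
    (hWp : ∀ i ∈ O ∪ R, μ {ω | W i ω = 1} = ENNReal.ofReal (p i))
    (hindep : iIndepFun W μ)
    (no nr μt μc pt pc st sc ρt ρc Stt Scc Stc μrt μrc σ2 lam : ℝ)
    (hno : no = (O.card : ℝ)) (hnr : nr = (R.card : ℝ))
    (hμt : μt = (1 / no) * ∑ i ∈ O, Yt i)
    (hμc : μc = (1 / no) * ∑ i ∈ O, Yc i)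
    (hpt : pt = (1 / no) * ∑ i ∈ O, p i)
    (hpc : pc = 1 - pt)
    (hst : st = (1 / no) * (∑ i ∈ O, Yt i * p i) - μt * pt)
    (hsc : sc = (1 / no) * (∑ i ∈ O, Yc i * (1 - p i)) - μc * pc)
    (hρt : ρt = μt + st / pt)
    (hρc : ρc = μc + sc / pc)
    (hStt : Stt = (1 / no) * ∑ i ∈ O, p i * (1 - p i) * (Yt i - ρt) ^ 2)
    (hScc : Scc = (1 / no) * ∑ i ∈ O, p i * (1 - p i) * (Yc i - ρc) ^ 2)
    (hStc : Stc = (1 / no) * ∑ i ∈ O, p i * (1 - p i) * (Yt i - ρt) * (Yc i - ρc))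
    (hμrt : μrt = (1 / nr) * ∑ i ∈ R, Yt i)
    (hμrc : μrc = (1 / nr) * ∑ i ∈ R, Yc i)
    (hσ2 : σ2 = (1 / nr) * ∑ i ∈ R, ((Yt i - μrt) * (1 - pr) + (Yc i - μrc) * pr) ^ 2)
    (hlam : lam = no / (no + nr))
    (Lo Lr : Ω → ℝ)
    (hLo : Lo = fun ω =>
        (1 / (no * pt)) * ∑ i ∈ O, W i ω * (Yt i - ρt)
          - (1 / (no * pc)) * ∑ i ∈ O, (1 - W i ω) * (Yc i - ρc))
    (hLr : Lr = fun ω =>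
        (1 / (nr * pr)) * ∑ i ∈ R, W i ω * (Yt i - μrt)
          - (1 / (nr * (1 - pr))) * ∑ i ∈ R, (1 - W i ω) * (Yc i - μrc)) :
    variance (fun ω => lam * Lo ω + (1 - lam) * Lr ω) μ
      = (lam / (no + nr)) * (Stt / pt ^ 2 + Scc / pc ^ 2 + 2 * Stc / (pt * pc))
        + ((1 - lam) / (no + nr)) * (σ2 / (pr * (1 - pr))) :=
  weighted_average_variance_general μ O R hR hdisj Yt Yc p pr hpr hpO hpR W hWmeas hW01 hWp hindep
    no nr pt pc ρt ρc Stt Scc Stc μrt μrc σ2 lam hno hnr hStt hScc hStc hσ2 hlam Lo Lr hLo hLr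
end

section
/- Let O and R be disjoint nonempty finite index sets of cardinalities n_o and n_r, with real outcomes Y_it, Y_ic and probabilities p_i ∈ (0,1) for i ∈ O, and probabilities p_i = p_r ∈ (0,1), constant, for i ∈ R. Write μ_ot = (1/n_o)Σ_{i∈O} Y_it, μ_oc = (1/n_o)Σ_{i∈O} Y_ic, μ_rt = (1/n_r)Σ_{i∈R} Y_it, μ_rc = (1/n_r)Σ_{i∈R} Y_ic, p_ot = (1/n_o)Σ_{i∈O} p_i, p_oc = 1 − p_ot, p_rt = p_r, p_rc = 1 − p_r, s_ot = (1/n_o)Σ_{i∈O} Y_it·p_i − μ_ot·p_ot, s_oc = (1/n_o)Σ_{i∈O} Y_ic·(1−p_i) − μ_oc·p_oc. Assume μ_ot − μ_rt = μ_oc − μ_rc, and call this common value Δ. For the pooled set S = O ∪ R of cardinality n = n_o + n_r define μ_t, μ_c, p_t, p_c, s_t, s_c by the same formulas over S. Then (μ_t − μ_c) + (s_t/p_t − s_c/p_c) − (μ_rt − μ_rc) = Δ·n_o·( p_ot/(n_o·p_ot + n_r·p_rt) − p_oc/(n_o·p_oc + n_r·p_rc) ) + s_ot·n_o/(n_o·p_ot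 + n_r·p_rt) − s_oc·n_o/(n_o·p_oc + n_r·p_rc). -/
/-!
The delta-method mean `μ + s / p` of a stratum, where `s` is the empirical covariance of `Y`
with the weight `p`, is the `p`-weighted mean `∑ Y p / ∑ p`.
When `O` is pooled with a stratum `R` on which the weight is a constant `a`, the pooled weighted
mean is the weighted average of the weighted mean over `O` and the plain mean `μ_R`, with masses
`n_o p_o` and `n_r a`; after subtracting `μ_R` only the `O`-part survives, namely
`n_o (s_o + p_o (μ_o - μ_R)) / (n_o p_o + n_r a)`. Applied to the treatment weights `p` and the
control weights `1 - p`, where `μ_o - μ_R = Δ` in both arms, the difference is the identity.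
-/

open Finset
open scoped BigOperators

section

variable {ι K : Type*} [Field K] [CharZero K]

def empiricalCov (S : Finset ι) (f g : ι → K) : K :=
  𝔼 i ∈ S, f i * g i - (𝔼 i ∈ S, f i) * 𝔼 i ∈ S, g i

lemma one_div_card_mul_sum (S : Finset ι) (f : ι → K) :
    1 / (#S : K) * ∑ i ∈ S, f i = 𝔼 i ∈ S, f i := by
  rw [expect_eq_sum_div_card, one_div_mul_eq_div]

lemma expect_add_empiricalCov_div_expect (S : Finset ι) (f w : ι → K)
    (hw : 𝔼 i ∈ S, w i ≠ 0) :
    𝔼 i ∈ S, f i + empiricalCov S f w / 𝔼 i ∈ S, w i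
      = (𝔼 i ∈ S, f i * w i) / 𝔼 i ∈ S, w i := by
  rw [empiricalCov]
  field_simp
  ring

lemma expect_add_empiricalCov_div_expect_union_sub_expect [DecidableEq ι] {O R : Finset ι}
    (hdisj : Disjoint O R) (f w : ι → K) (a : K) (hwR : ∀ i ∈ R, w i = a)
    (hw : 𝔼 i ∈ O ∪ R, w i ≠ 0) :
    𝔼 i ∈ O ∪ R, f i + empiricalCov (O ∪ R) f w / 𝔼 i ∈ O ∪ R, w i - 𝔼 i ∈ R, f i
      = #O * (empiricalCov O f w + (𝔼 i ∈ O, w i) * (𝔼 i ∈ O, f i - 𝔼 i ∈ R, f i))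
          / (#O * 𝔼 i ∈ O, w i + #R * a) := by
  have hsum (g : ι → K) : ∑ i ∈ O ∪ R, g i = #O * 𝔼 i ∈ O, g i + ∑ i ∈ R, g i := by
    rw [sum_union hdisj, card_mul_expect]
  have hsumR : ∑ i ∈ R, w i = #R * a := by
    rw [sum_congr rfl hwR, sum_const, nsmul_eq_mul]
  have hsumRf : ∑ i ∈ R, f i * w i = a * (#R * 𝔼 i ∈ R, f i) := by
    rw [card_mul_expect, mul_sum]
    exact sum_congr rfl fun i hi => by rw [hwR i hi, mul_comm]
  have hS : (#(O ∪ R) : K) ≠ 0 := by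
    obtain ⟨i, hi, -⟩ := exists_ne_zero_of_expect_ne_zero hw
    exact_mod_cast card_ne_zero_of_mem hi
  have hden : (#O : K) * 𝔼 i ∈ O, w i + #R * a ≠ 0 := by
    rw [← hsumR, ← hsum, ← card_mul_expect]
    exact mul_ne_zero hS hw
  rw [expect_add_empiricalCov_div_expect _ _ _ hw, expect_eq_sum_div_card, expect_eq_sum_div_card,
    div_div_div_cancel_right₀ hS, hsum, hsum, hsumR, hsumRf, div_sub' hden, div_left_inj' hden,
    empiricalCov]
  ring

end

theorem spiked_in_bias_identity_general
    {ι : Type*} [DecidableEq ι] (O R : Finset ι)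
    (hO : O.Nonempty) (hdisj : Disjoint O R)
    (Yt Yc p : ι → ℝ) (pr : ℝ) (hpr : pr ∈ Set.Ioo (0 : ℝ) 1)
    (hpO : ∀ i ∈ O, p i ∈ Set.Ioo (0 : ℝ) 1)
    (hpR : ∀ i ∈ R, p i = pr)
    (no nr μot μoc μrt μrc pot poc prt prc sot soc Δ : ℝ)
    (hno : no = (O.card : ℝ)) (hnr : nr = (R.card : ℝ))
    (hμot : μot = (1 / no) * ∑ i ∈ O, Yt i)
    (hμoc : μoc = (1 / no) * ∑ i ∈ O, Yc i)
    (hμrt : μrt = (1 / nr) * ∑ i ∈ R, Yt i)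
    (hμrc : μrc = (1 / nr) * ∑ i ∈ R, Yc i)
    (hpot : pot = (1 / no) * ∑ i ∈ O, p i)
    (hpoc : poc = 1 - pot)
    (hprt : prt = pr)
    (hprc : prc = 1 - pr)
    (hsot : sot = (1 / no) * (∑ i ∈ O, Yt i * p i) - μot * pot)
    (hsoc : soc = (1 / no) * (∑ i ∈ O, Yc i * (1 - p i)) - μoc * poc)
    (hΔt : μot - μrt = Δ) (hΔc : μoc - μrc = Δ)
    (n μt μc pt pc st sc : ℝ)
    (hn : n = ((O ∪ R).card : ℝ))
    (hμt : μt = (1 / n) * ∑ i ∈ O ∪ R, Yt i)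
    (hμc : μc = (1 / n) * ∑ i ∈ O ∪ R, Yc i)
    (hpt : pt = (1 / n) * ∑ i ∈ O ∪ R, p i)
    (hpc : pc = 1 - pt)
    (hst : st = (1 / n) * (∑ i ∈ O ∪ R, Yt i * p i) - μt * pt)
    (hsc : sc = (1 / n) * (∑ i ∈ O ∪ R, Yc i * (1 - p i)) - μc * pc) :
    (μt - μc) + (st / pt - sc / pc) - (μrt - μrc)
      = Δ * no * (pot / (no * pot + nr * prt) - poc / (no * poc + nr * prc))
        + sot * no / (no * pot + nr * prt)
        - soc * no / (no * poc + nr * prc) := by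
  have hS : (O ∪ R).Nonempty := hO.mono subset_union_left
  have hp : ∀ i ∈ O ∪ R, p i ∈ Set.Ioo (0 : ℝ) 1 := by
    intro i hi
    rcases mem_union.1 hi with hi | hi
    exacts [hpO i hi, hpR i hi ▸ hpr]
  have ht := expect_add_empiricalCov_div_expect_union_sub_expect hdisj Yt p pr hpR
    (expect_pos (fun i hi => (hp i hi).1) hS).ne'
  have hc := expect_add_empiricalCov_div_expect_union_sub_expect hdisj Yc (fun i => 1 - p i)
    (1 - pr) (fun i hi => by rw [hpR i hi]) (expect_pos (fun i hi => sub_pos.2 (hp i hi).2) hS).ne'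
  simp only [empiricalCov, expect_sub_distrib, expect_const hO, expect_const hS] at ht hc
  subst hno hnr hn hprt hprc hpoc hpc
  simp only [one_div_card_mul_sum] at hμot hμoc hμrt hμrc hpot hsot hsoc hμt hμc hpt hst hsc
  subst hμot hμoc hμrt hμrc hpot hsot hsoc hμt hμc hpt hst hsc hΔt
  rw [hΔc] at hc
  linear_combination ht - hc

/-- Equation (spiked-in bias, exact form): with constant probability `p_r` on `R`
and mean-difference `Δ = μ_ot − μ_rt = μ_oc − μ_rc`, the leading delta-method bias
of the pooled (spiked-in) estimator on `S = O ∪ R` relative to `τ = μ_rt − μ_rc` is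
`Δ·n_o·(p_ot/(n_o p_ot + n_r p_rt) − p_oc/(n_o p_oc + n_r p_rc))
  + s_ot·n_o/(n_o p_ot + n_r p_rt) − s_oc·n_o/(n_o p_oc + n_r p_rc)`. -/
theorem spiked_in_bias_identity
    {ι : Type*} [DecidableEq ι] (O R : Finset ι)
    (hO : O.Nonempty) (hR : R.Nonempty) (hdisj : Disjoint O R)
    (Yt Yc p : ι → ℝ) (pr : ℝ) (hpr : pr ∈ Set.Ioo (0 : ℝ) 1)
    (hpO : ∀ i ∈ O, p i ∈ Set.Ioo (0 : ℝ) 1)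
    (hpR : ∀ i ∈ R, p i = pr)
    (no nr μot μoc μrt μrc pot poc prt prc sot soc Δ : ℝ)
    (hno : no = (O.card : ℝ)) (hnr : nr = (R.card : ℝ))
    (hμot : μot = (1 / no) * ∑ i ∈ O, Yt i)
    (hμoc : μoc = (1 / no) * ∑ i ∈ O, Yc i)
    (hμrt : μrt = (1 / nr) * ∑ i ∈ R, Yt i)
    (hμrc : μrc = (1 / nr) * ∑ i ∈ R, Yc i)
    (hpot : pot = (1 / no) * ∑ i ∈ O, p i)
    (hpoc : poc = 1 - pot)
    (hprt : prt = pr)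
    (hprc : prc = 1 - pr)
    (hsot : sot = (1 / no) * (∑ i ∈ O, Yt i * p i) - μot * pot)
    (hsoc : soc = (1 / no) * (∑ i ∈ O, Yc i * (1 - p i)) - μoc * poc)
    (hΔt : μot - μrt = Δ) (hΔc : μoc - μrc = Δ)
    (n μt μc pt pc st sc : ℝ)
    (hn : n = ((O ∪ R).card : ℝ))
    (hμt : μt = (1 / n) * ∑ i ∈ O ∪ R, Yt i)
    (hμc : μc = (1 / n) * ∑ i ∈ O ∪ R, Yc i)
    (hpt : pt = (1 / n) * ∑ i ∈ O ∪ R, p i)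
    (hpc : pc = 1 - pt)
    (hst : st = (1 / n) * (∑ i ∈ O ∪ R, Yt i * p i) - μt * pt)
    (hsc : sc = (1 / n) * (∑ i ∈ O ∪ R, Yc i * (1 - p i)) - μc * pc) :
    (μt - μc) + (st / pt - sc / pc) - (μrt - μrc)
      = Δ * no * (pot / (no * pot + nr * prt) - poc / (no * poc + nr * prc))
        + sot * no / (no * pot + nr * prt)
        - soc * no / (no * poc + nr * prc) :=
  spiked_in_bias_identity_general O R hO hdisj Yt Yc p pr hpr hpO hpR no nr μot μoc μrt μrc pot poc
    prt prc sot soc Δ hno hnr hμot hμoc hμrt hμrc hpot hpoc hprt hprc hsot hsoc hΔt hΔc n μt μc pt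
    pc st sc hn hμt hμc hpt hpc hst hsc
end
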